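/- Let f(r,u,v) = (vᵀr/‖r‖)u + (uᵀr/‖r‖)v + (uᵀv/‖r‖)r − 5((uᵀr)(vᵀr)/‖r‖³)r. Define c₁(r,f*) = R(r,f*)ᵀ(a_x, a_y, 0)ᵀ and c₂(r,f*) = R(r,f*)ᵀ(b_x, b_y, 0)ᵀ using the rotation R and scalars a_x, a_y, b_x, b_y of the allocation construction. Then for all r ∈ ℝ³\{0} and all f* ∈ ℝ³, f(r, c₁(r,f*), c₂(r,f*)) = f*. That is, any prescribed intersatellite force f* can be exactly realized by the amplitude pair (c₁, c₂). -/

import Mathlib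

open Matrix

noncomputable section

def norm3 (r : Fin 3 → ℝ) : ℝ := Real.sqrt (r ⬝ᵥ r)

def Phi1 (r f : Fin 3 → ℝ) : ℝ :=
  Real.sqrt (norm3 (crossProduct r f) ^ 2 + norm3 r ^ 2 * norm3 f ^ 2)

def Phi2 (r f : Fin 3 → ℝ) : ℝ := (2 - Real.sign (r ⬝ᵥ f) ^ 2) * Phi1 r f

def aX (r f : Fin 3 → ℝ) : ℝ :=
  -(Real.sign (r ⬝ᵥ f) / 2) * Real.sqrt ((|r ⬝ᵥ f| + Phi1 r f) / norm3 r)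

def aY (r f : Fin 3 → ℝ) : ℝ :=
  (1 / Real.sqrt 2) * Real.sqrt ((-|r ⬝ᵥ f| + Phi2 r f) / norm3 r)

def bX (r f : Fin 3 → ℝ) : ℝ :=
  (1 / 2) * Real.sqrt ((|r ⬝ᵥ f| + Phi2 r f) / norm3 r)

def bY (r f : Fin 3 → ℝ) : ℝ :=
  -(Real.sign (r ⬝ᵥ f) / Real.sqrt 2) * Real.sqrt ((-|r ⬝ᵥ f| + Phi1 r f) / norm3 r)

open Classical in
def Rmat (r f : Fin 3 → ℝ) : Matrix (Fin 3) (Fin 3) ℝ :=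
  if crossProduct r f ≠ 0 then
    Matrix.of ![ (1 / norm3 r) • r,
      (1 / (norm3 r * norm3 (crossProduct r f))) • ((r ⬝ᵥ r) • f - (r ⬝ᵥ f) • r),
      (1 / norm3 (crossProduct r f)) • (crossProduct r f) ]
  else
    Matrix.of ![ (1 / norm3 r) • r, 0, 0 ]

def c1 (r f : Fin 3 → ℝ) : Fin 3 → ℝ := (Rmat r f)ᵀ.mulVec ![aX r f, aY r f, 0]

def c2 (r f : Fin 3 → ℝ) : Fin 3 → ℝ := (Rmat r f)ᵀ.mulVec ![bX r f, bY r f, 0]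

def f3 (r u v : Fin 3 → ℝ) : Fin 3 → ℝ :=
  ((v ⬝ᵥ r) / norm3 r) • u + ((u ⬝ᵥ r) / norm3 r) • v + ((u ⬝ᵥ v) / norm3 r) • r
    - (5 * (u ⬝ᵥ r) * (v ⬝ᵥ r) / norm3 r ^ 3) • r

end

/-!
Put `e = r / ‖r‖`, `β = rᵀf`, `μ = ‖r × f‖`, and let `w` be the second row of `Rmat r f`, which is
`(r × f) × r / (‖r‖ μ)`: a unit vector orthogonal to `r`, or `0` when `μ = 0`. Then
`c₁ = a_x e + a_y w`, `c₂ = b_x e + b_y w`; for `w ⊥ r` one computes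
`f3 r (a e + b w) (c e + d w) = (b d ‖w‖² - 2 a c) e + (a d + b c) w`, and the triple product
expansion gives `f = (β / ‖r‖) e + (μ / ‖r‖) w`. So it suffices that
`a_y b_y - 2 a_x b_x = β / ‖r‖` and `a_x b_y + a_y b_x = μ / ‖r‖` (with `b_y = 0` when `w = 0`).
Both follow from `Φ₁² = 2 μ² + β²` (Lagrange's identity): for `β ≠ 0` we have `sgn² β = 1` and
`Φ₂ = Φ₁`, while for `β = 0` we have `a_x = b_y = 0` and `Φ₂ = 2 Φ₁ = 2 √2 μ`.
-/

lemma dotProduct_self_nonneg {ι R : Type*} [Fintype ι] [Ring R] [LinearOrder R]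
    [IsStrictOrderedRing R] (v : ι → R) : 0 ≤ v ⬝ᵥ v :=
  Fintype.sum_nonneg fun i => mul_self_nonneg (v i)

lemma norm3_nonneg (r : Fin 3 → ℝ) : 0 ≤ norm3 r := Real.sqrt_nonneg _

lemma norm3_sq (r : Fin 3 → ℝ) : norm3 r ^ 2 = r ⬝ᵥ r :=
  Real.sq_sqrt (dotProduct_self_nonneg r)

lemma norm3_pos {r : Fin 3 → ℝ} (hr : r ≠ 0) : 0 < norm3 r :=
  Real.sqrt_pos.2 <| (dotProduct_self_nonneg r).lt_of_ne' (dotProduct_self_eq_zero.not.2 hr)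

lemma norm3_cross_sq (r f : Fin 3 → ℝ) :
    norm3 (r ⨯₃ f) ^ 2 = norm3 r ^ 2 * norm3 f ^ 2 - (r ⬝ᵥ f) ^ 2 := by
  rw [norm3_sq, norm3_sq, norm3_sq, cross_dot_cross, dotProduct_comm f r]
  ring

lemma Phi1_nonneg (r f : Fin 3 → ℝ) : 0 ≤ Phi1 r f := Real.sqrt_nonneg _

lemma Phi1_sq (r f : Fin 3 → ℝ) : Phi1 r f ^ 2 = 2 * norm3 (r ⨯₃ f) ^ 2 + (r ⬝ᵥ f) ^ 2 := by
  rw [Phi1, Real.sq_sqrt (by positivity), norm3_cross_sq]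
  ring

lemma abs_dotProduct_le_Phi1 (r f : Fin 3 → ℝ) : |r ⬝ᵥ f| ≤ Phi1 r f :=
  Real.abs_le_sqrt <| by nlinarith [norm3_cross_sq r f, sq_nonneg (norm3 (r ⨯₃ f))]

lemma Phi1_of_cross_eq_zero {r f : Fin 3 → ℝ} (h : r ⨯₃ f = 0) : Phi1 r f = |r ⬝ᵥ f| := by
  have hm : norm3 (r ⨯₃ f) = 0 := by simp [norm3, h]
  rw [← abs_of_nonneg (Phi1_nonneg r f), ← sq_eq_sq_iff_abs_eq_abs, Phi1_sq, hm]
  ring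

lemma Real.sign_mul_abs (x : ℝ) : Real.sign x * |x| = x := by
  rcases lt_trichotomy x 0 with h | rfl | h
  · rw [Real.sign_of_neg h, abs_of_neg h]; ring
  · simp
  · rw [Real.sign_of_pos h, abs_of_pos h]; ring

lemma Real.sign_sq_of_ne_zero {x : ℝ} (hx : x ≠ 0) : Real.sign x ^ 2 = 1 := by
  rcases Real.sign_apply_eq_of_ne_zero x hx with h | h <;> simp [h]

lemma Phi2_of_dotProduct_ne_zero {r f : Fin 3 → ℝ} (h : r ⬝ᵥ f ≠ 0) : Phi2 r f = Phi1 r f := by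
  rw [Phi2, Real.sign_sq_of_ne_zero h]; ring

lemma Phi2_of_dotProduct_eq_zero {r f : Fin 3 → ℝ} (h : r ⬝ᵥ f = 0) :
    Phi2 r f = 2 * Phi1 r f := by
  rw [Phi2, h, Real.sign_zero]; ring

lemma aY_mul_bY_sub_two_mul_aX_mul_bX {r : Fin 3 → ℝ} (hr : r ≠ 0) (f : Fin 3 → ℝ) :
    aY r f * bY r f - 2 * aX r f * bX r f = r ⬝ᵥ f / norm3 r := by
  by_cases hβ : r ⬝ᵥ f = 0
  · simp [aX, bY, hβ]
  have hn := norm3_pos hr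
  have hΦ := abs_dotProduct_le_Phi1 r f
  set A := |r ⬝ᵥ f|
  have hP : √((A + Phi1 r f) / norm3 r) ^ 2 = (A + Phi1 r f) / norm3 r :=
    Real.sq_sqrt (div_nonneg (by linarith [abs_nonneg (r ⬝ᵥ f)]) hn.le)
  have hQ : √((-A + Phi1 r f) / norm3 r) ^ 2 = (-A + Phi1 r f) / norm3 r :=
    Real.sq_sqrt (div_nonneg (by linarith) hn.le)
  rw [aX, aY, bX, bY, Phi2_of_dotProduct_ne_zero hβ]
  calc _ = Real.sign (r ⬝ᵥ f) / 2 * (√((A + Phi1 r f) / norm3 r) ^ 2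
        - 2 * √((-A + Phi1 r f) / norm3 r) ^ 2 / √2 ^ 2) := by ring
    _ = _ := by
      rw [hP, hQ, Real.sq_sqrt zero_le_two]
      conv_rhs => rw [← Real.sign_mul_abs (r ⬝ᵥ f)]
      field_simp
      ring

lemma aX_mul_bY_add_aY_mul_bX {r : Fin 3 → ℝ} (hr : r ≠ 0) (f : Fin 3 → ℝ) :
    aX r f * bY r f + aY r f * bX r f = norm3 (r ⨯₃ f) / norm3 r := by
  have hn := norm3_pos hr
  have hm := norm3_nonneg (r ⨯₃ f)
  have h2 : √2 ^ 2 = 2 := Real.sq_sqrt zero_le_two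
  by_cases hβ : r ⬝ᵥ f = 0
  · have hΦ : Phi1 r f = √2 * norm3 (r ⨯₃ f) := by
      rw [← pow_left_inj₀ (Phi1_nonneg r f) (by positivity) two_ne_zero, Phi1_sq, hβ, mul_pow,
        h2]
      ring
    have hR : √(2 * Phi1 r f / norm3 r) ^ 2 = 2 * Phi1 r f / norm3 r :=
      Real.sq_sqrt (by rw [hΦ]; positivity)
    rw [aX, aY, bX, bY, Phi2_of_dotProduct_eq_zero hβ, hβ, Real.sign_zero, abs_zero]
    simp only [neg_zero, zero_add]
    calc _ = √(2 * Phi1 r f / norm3 r) ^ 2 / (2 * √2) := by ring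
      _ = _ := by
        rw [hR, hΦ]
        field_simp
  have hΦ := abs_dotProduct_le_Phi1 r f
  set A := |r ⬝ᵥ f|
  have hPQ : √((A + Phi1 r f) / norm3 r) * √((-A + Phi1 r f) / norm3 r)
      = √2 * norm3 (r ⨯₃ f) / norm3 r := by
    rw [← pow_left_inj₀ (by positivity) (by positivity) two_ne_zero, mul_pow,
      Real.sq_sqrt (div_nonneg (by linarith [abs_nonneg (r ⬝ᵥ f)]) hn.le),
      Real.sq_sqrt (div_nonneg (by linarith) hn.le)]
    field_simp
    rw [h2]
    linear_combination Phi1_sq r f - sq_abs (r ⬝ᵥ f)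
  rw [aX, aY, bX, bY, Phi2_of_dotProduct_ne_zero hβ]
  calc _ = (Real.sign (r ⬝ᵥ f) ^ 2 + 1) / (2 * √2)
        * (√((A + Phi1 r f) / norm3 r) * √((-A + Phi1 r f) / norm3 r)) := by ring
    _ = _ := by
      rw [Real.sign_sq_of_ne_zero hβ, hPQ]
      field_simp
      ring

lemma f3_smul_add_smul {r w : Fin 3 → ℝ} (hr : r ≠ 0) (hw : w ⬝ᵥ r = 0) (a b c d : ℝ) :
    f3 r (a • (1 / norm3 r) • r + b • w) (c • (1 / norm3 r) • r + d • w)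
      = (b * d * (w ⬝ᵥ w) - 2 * a * c) • (1 / norm3 r) • r + (a * d + b * c) • w := by
  have hn := (norm3_pos hr).ne'
  have hrr : r ⬝ᵥ r = norm3 r ^ 2 := (norm3_sq r).symm
  have hrw : r ⬝ᵥ w = 0 := by rwa [dotProduct_comm]
  unfold f3
  simp only [add_dotProduct, dotProduct_add, smul_dotProduct, dotProduct_smul, hw, hrw, hrr,
    smul_eq_mul]
  match_scalars <;> field_simp <;> ring

lemma transpose_mulVec_vec3 {R : Type*} [CommSemiring R] (M : Matrix (Fin 3) (Fin 3) R)
    (p q : R) : Mᵀ *ᵥ ![p, q, 0] = p • M 0 + q • M 1 := by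
  simp [mulVec_transpose, vecMul_eq_sum, Fin.sum_univ_three]

lemma Rmat_zero (r f : Fin 3 → ℝ) : Rmat r f 0 = (1 / norm3 r) • r := by
  unfold Rmat; split_ifs <;> rfl

lemma Rmat_one (r f : Fin 3 → ℝ) :
    Rmat r f 1 = (1 / (norm3 r * norm3 (r ⨯₃ f))) • (r ⨯₃ f ⨯₃ r) := by
  unfold Rmat
  split_ifs with h
  · rw [cross_cross_eq_smul_sub_smul, dotProduct_comm f r]
    rfl
  · rw [not_not.1 h, map_zero, LinearMap.zero_apply, smul_zero]
    rfl

lemma Rmat_one_dotProduct (r f : Fin 3 → ℝ) : Rmat r f 1 ⬝ᵥ r = 0 := by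
  rw [Rmat_one, smul_dotProduct, dotProduct_comm, dot_cross_self, smul_zero]

lemma Rmat_one_dotProduct_self {r f : Fin 3 → ℝ} (hr : r ≠ 0) (h : r ⨯₃ f ≠ 0) :
    Rmat r f 1 ⬝ᵥ Rmat r f 1 = 1 := by
  have hn := (norm3_pos hr).ne'
  have hm := (norm3_pos h).ne'
  rw [Rmat_one, smul_dotProduct, dotProduct_smul, cross_dot_cross, dotProduct_comm (r ⨯₃ f) r,
    dot_self_cross, ← norm3_sq, ← norm3_sq, smul_eq_mul, smul_eq_mul]
  field_simp
  ring

lemma bY_of_cross_eq_zero {r f : Fin 3 → ℝ} (h : r ⨯₃ f = 0) : bY r f = 0 := by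
  rw [bY, Phi1_of_cross_eq_zero h, neg_add_cancel, zero_div, Real.sqrt_zero, mul_zero]

lemma bY_mul_Rmat_one_dotProduct_self {r : Fin 3 → ℝ} (hr : r ≠ 0) (f : Fin 3 → ℝ) :
    bY r f * (Rmat r f 1 ⬝ᵥ Rmat r f 1) = bY r f := by
  by_cases h : r ⨯₃ f = 0
  · simp [bY_of_cross_eq_zero h]
  · rw [Rmat_one_dotProduct_self hr h, mul_one]

lemma eq_smul_add_smul_Rmat_one {r : Fin 3 → ℝ} (hr : r ≠ 0) (f : Fin 3 → ℝ) :
    f = (r ⬝ᵥ f / norm3 r) • (1 / norm3 r) • r + (norm3 (r ⨯₃ f) / norm3 r) • Rmat r f 1 := by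
  have hn := (norm3_pos hr).ne'
  have hw : (norm3 (r ⨯₃ f) / norm3 r) • Rmat r f 1 = (1 / norm3 r ^ 2) • (r ⨯₃ f ⨯₃ r) := by
    rw [Rmat_one, smul_smul]
    by_cases h : r ⨯₃ f = 0
    · simp [h]
    · have hm := (norm3_pos h).ne'
      congr 1
      field_simp
  rw [hw, cross_cross_eq_smul_sub_smul, ← norm3_sq, dotProduct_comm f r]
  match_scalars
  · field_simp
  · field_simp
    ring

theorem allocation_exact (r f : Fin 3 → ℝ) (hr : r ≠ 0) :
    f3 r (c1 r f) (c2 r f) = f := by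
  have hframe (p q : ℝ) : (Rmat r f)ᵀ *ᵥ ![p, q, 0] = p • (1 / norm3 r) • r + q • Rmat r f 1 := by
    rw [transpose_mulVec_vec3, Rmat_zero]
  rw [c1, c2, hframe, hframe, f3_smul_add_smul hr (Rmat_one_dotProduct r f), mul_assoc (aY r f),
    bY_mul_Rmat_one_dotProduct_self hr, aY_mul_bY_sub_two_mul_aX_mul_bX hr,
    aX_mul_bY_add_aY_mul_bX hr]
  exact (eq_smul_add_smul_Rmat_one hr f).symm
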